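/- arXiv:2411.19260 — 7 statements merged into one kernel-verified Lean document; each statement's English description precedes it below -/
import Mathlib

section
/- Let S be a numerical semigroup and h ∈ S nonzero. Define D(S,h) = ⋂_{γ ∈ Ap(S,h)} (γ + S). Then D(S,h) ⊆ (h + c - 1) + S, where c is the conductor of S; moreover equality D(S,h) = (h + c - 1) + S holds if and only if S is symmetric. -/
/-!
If `h ≠ 0`, then `h + c - 1` lies in `Ap(S,h)`, since `c - 1 ∉ S`; so `D(S,h) ⊆ (h + c - 1) + S`, and
equality means `h + c - 1 - γ ∈ S` for every `γ ∈ Ap(S,h)`. For such `γ` we have `γ - h ∉ S`, so under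
symmetry `c - 1 - (γ - h) ∈ S`. Conversely, if `x ∉ S` and `y = c - 1 - x ∉ S`, the first term
`w = y + (k + 1) h` of `y, y + h, y + 2h, …` lying in `S` is in `Ap(S,h)`, and then
`x = (h + c - 1 - w) + k h ∈ S`, a contradiction.
-/

namespace NumericalSemigroup

def apery (S : Set ℕ) (h : ℕ) : Set ℕ := {w | w ∈ S ∧ ¬ ∃ u ∈ S, w = u + h}

def principalIdeal (S : Set ℕ) (γ : ℤ) : Set ℤ := {z | ∃ t ∈ S, z = γ + t}

def dedekindIdeal (S : Set ℕ) (h : ℕ) : Set ℤ := {z | ∀ γ ∈ apery S h, z ∈ principalIdeal S γ}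

def IsSymmetric (S : Set ℕ) (c : ℕ) : Prop :=
  ∀ x : ℤ, x ∈ (Nat.cast '' S : Set ℤ) ↔ (c : ℤ) - 1 - x ∉ (Nat.cast '' S : Set ℤ)

variable {S : Set ℕ} {c h : ℕ}

theorem mul_mem (h0 : 0 ∈ S) (hadd : ∀ a ∈ S, ∀ b ∈ S, a + b ∈ S) (hh : h ∈ S) :
    ∀ k : ℕ, k * h ∈ S
  | 0 => by simpa using h0
  | k + 1 => by simpa [add_mul] using hadd _ (mul_mem h0 hadd hh k) _ hh

theorem sub_one_not_mem_of_isLeast (hc : IsLeast {c' : ℕ | ∀ n ≥ c', n ∈ S} c) (hc0 : c ≠ 0) :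
    c - 1 ∉ S := by
  intro hmem
  have : c ≤ c - 1 := hc.2 fun n hn =>
    (Nat.eq_or_lt_of_le hn).elim (· ▸ hmem) fun _ => hc.1 n (by omega)
  omega

theorem add_sub_one_mem_apery (hc : IsLeast {c' : ℕ | ∀ n ≥ c', n ∈ S} c) (hh0 : h ≠ 0) :
    h + c - 1 ∈ apery S h := by
  refine ⟨hc.1 _ (by omega), ?_⟩
  rintro ⟨u, hu, hsum⟩
  obtain rfl : u = c - 1 := by omega
  exact sub_one_not_mem_of_isLeast hc (by omega) hu

theorem exists_add_succ_mul_mem_apery (hcond : ∀ n ≥ c, n ∈ S) (hh0 : h ≠ 0) {y : ℕ}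
    (hy : y ∉ S) : ∃ k, y + (k + 1) * h ∈ apery S h := by
  classical
  have hex : ∃ k, y + k * h ∈ S := ⟨c, hcond _ (by nlinarith [Nat.one_le_iff_ne_zero.2 hh0])⟩
  obtain ⟨k, hk⟩ : ∃ k, Nat.find hex = k + 1 :=
    Nat.exists_eq_succ_of_ne_zero fun h0 => hy (by simpa [h0] using Nat.find_spec hex)
  refine ⟨k, hk ▸ Nat.find_spec hex, ?_⟩
  rintro ⟨u, hu, hsum⟩
  obtain rfl : u = y + k * h := by rw [add_mul, one_mul, ← add_assoc] at hsum; omega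
  exact Nat.find_min hex (by omega) hu

theorem principalIdeal_subset_principalIdeal_iff (h0 : 0 ∈ S)
    (hadd : ∀ a ∈ S, ∀ b ∈ S, a + b ∈ S) {γ δ : ℤ} :
    principalIdeal S γ ⊆ principalIdeal S δ ↔ γ - δ ∈ (Nat.cast '' S : Set ℤ) := by
  constructor
  · intro hsub
    obtain ⟨t, ht, hγ⟩ := hsub (show γ ∈ principalIdeal S γ from ⟨0, h0, by simp⟩)
    exact ⟨t, ht, by omega⟩
  · rintro ⟨n, hn, hγδ⟩ z ⟨t, ht, rfl⟩
    exact ⟨n + t, hadd n hn t ht, by push_cast; omega⟩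

theorem dedekindIdeal_subset_principalIdeal (hc : IsLeast {c' : ℕ | ∀ n ≥ c', n ∈ S} c)
    (hh0 : h ≠ 0) : dedekindIdeal S h ⊆ principalIdeal S ((h : ℤ) + c - 1) := by
  intro z hz
  obtain ⟨t, ht, rfl⟩ := hz _ (add_sub_one_mem_apery hc hh0)
  exact ⟨t, ht, by omega⟩

theorem dedekindIdeal_eq_principalIdeal_iff (h0 : 0 ∈ S) (hadd : ∀ a ∈ S, ∀ b ∈ S, a + b ∈ S)
    (hc : IsLeast {c' : ℕ | ∀ n ≥ c', n ∈ S} c) (hh0 : h ≠ 0) :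
    dedekindIdeal S h = principalIdeal S ((h : ℤ) + c - 1) ↔
      ∀ γ ∈ apery S h, (h : ℤ) + c - 1 - γ ∈ (Nat.cast '' S : Set ℤ) := by
  rw [(dedekindIdeal_subset_principalIdeal hc hh0).ge_iff_eq.symm]
  refine ⟨fun hsub γ hγ => ?_, fun hmem z hz γ hγ => ?_⟩
  · exact (principalIdeal_subset_principalIdeal_iff h0 hadd).1 (fun z hz => hsub hz γ hγ)
  · exact (principalIdeal_subset_principalIdeal_iff h0 hadd).2 (hmem γ hγ) hz

theorem sub_one_sub_not_mem_of_mem (hadd : ∀ a ∈ S, ∀ b ∈ S, a + b ∈ S)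
    (hc : IsLeast {c' : ℕ | ∀ n ≥ c', n ∈ S} c) {x : ℤ} (hx : x ∈ (Nat.cast '' S : Set ℤ)) :
    (c : ℤ) - 1 - x ∉ (Nat.cast '' S : Set ℤ) := by
  obtain ⟨n, hn, rfl⟩ := hx
  rintro ⟨m, hm, hsum⟩
  have hnm : m + n = c - 1 := by omega
  exact sub_one_not_mem_of_isLeast hc (by omega) (hnm ▸ hadd m hm n hn)

theorem isSymmetric_iff_forall_apery (h0 : 0 ∈ S) (hadd : ∀ a ∈ S, ∀ b ∈ S, a + b ∈ S)
    (hc : IsLeast {c' : ℕ | ∀ n ≥ c', n ∈ S} c) (hh : h ∈ S) (hh0 : h ≠ 0) :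
    IsSymmetric S c ↔ ∀ γ ∈ apery S h, (h : ℤ) + c - 1 - γ ∈ (Nat.cast '' S : Set ℤ) := by
  refine ⟨fun hsym γ ⟨_, hγ⟩ => ?_, fun hap x => ⟨sub_one_sub_not_mem_of_mem hadd hc, ?_⟩⟩
  · have hnot : (c : ℤ) - 1 - ((c : ℤ) - 1 - (γ - h)) ∉ (Nat.cast '' S : Set ℤ) := by
      rintro ⟨u, hu, hsub⟩
      exact hγ ⟨u, hu, by omega⟩
    obtain ⟨n, hn, hsum⟩ := (hsym _).2 hnot
    exact ⟨n, hn, by omega⟩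
  · intro hy
    by_contra hx
    have hx0 : 0 ≤ x := by
      by_contra hneg
      exact hy ⟨_, hc.1 ((c : ℤ) - 1 - x).toNat (by omega), by omega⟩
    have hxc : x < c := by
      by_contra hge
      exact hx ⟨_, hc.1 x.toNat (by omega), by omega⟩
    obtain ⟨k, hk⟩ := exists_add_succ_mul_mem_apery hc.1 hh0 (y := ((c : ℤ) - 1 - x).toNat)
      fun hmem => hy ⟨_, hmem, by omega⟩
    obtain ⟨n, hn, hsum⟩ := hap _ hk
    rw [Nat.cast_add, Int.toNat_of_nonneg (by omega)] at hsum
    refine hx ⟨n + k * h, hadd _ hn _ (mul_mem h0 hadd hh k), ?_⟩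
    push_cast at hsum ⊢
    linarith

end NumericalSemigroup

open NumericalSemigroup in
theorem dedekind_ideal_subset_general (S : Set ℕ) (h0 : 0 ∈ S)
    (hadd : ∀ a ∈ S, ∀ b ∈ S, a + b ∈ S)
    (c : ℕ) (hc : IsLeast {c' : ℕ | ∀ n ≥ c', n ∈ S} c)
    (h : ℕ) (hh : h ∈ S) (hh0 : h ≠ 0) :
    {z : ℤ | ∀ γ ∈ {w : ℕ | w ∈ S ∧ ¬ ∃ u ∈ S, w = u + h},
        ∃ t ∈ S, z = (γ : ℤ) + t} ⊆
      {z : ℤ | ∃ t ∈ S, z = (h : ℤ) + c - 1 + t} ∧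
    ({z : ℤ | ∀ γ ∈ {w : ℕ | w ∈ S ∧ ¬ ∃ u ∈ S, w = u + h},
        ∃ t ∈ S, z = (γ : ℤ) + t} =
      {z : ℤ | ∃ t ∈ S, z = (h : ℤ) + c - 1 + t} ↔
      (∀ x : ℤ, (∃ n ∈ S, (n : ℤ) = x) ↔ ¬ ∃ n ∈ S, (n : ℤ) = (c : ℤ) - 1 - x)) :=
  ⟨dedekindIdeal_subset_principalIdeal hc hh0,
    (dedekindIdeal_eq_principalIdeal_iff h0 hadd hc hh0).trans
      (isSymmetric_iff_forall_apery h0 hadd hc hh hh0).symm⟩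

/-- For a numerical semigroup `S` with conductor `c` and nonzero `h ∈ S`,
the `S`-ideal `D(S,h) = ⋂_{γ ∈ Ap(S,h)} (γ + S)` is contained in the principal
ideal `(h + c - 1) + S`, with equality iff `S` is symmetric. -/
theorem dedekind_ideal_subset (S : Set ℕ) (h0 : 0 ∈ S)
    (hadd : ∀ a ∈ S, ∀ b ∈ S, a + b ∈ S)
    (hfin : {n : ℕ | n ∉ S}.Finite)
    (c : ℕ) (hc : IsLeast {c' : ℕ | ∀ n ≥ c', n ∈ S} c)
    (h : ℕ) (hh : h ∈ S) (hh0 : h ≠ 0) :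
    {z : ℤ | ∀ γ ∈ {w : ℕ | w ∈ S ∧ ¬ ∃ u ∈ S, w = u + h},
        ∃ t ∈ S, z = (γ : ℤ) + t} ⊆
      {z : ℤ | ∃ t ∈ S, z = (h : ℤ) + c - 1 + t} ∧
    ({z : ℤ | ∀ γ ∈ {w : ℕ | w ∈ S ∧ ¬ ∃ u ∈ S, w = u + h},
        ∃ t ∈ S, z = (γ : ℤ) + t} =
      {z : ℤ | ∃ t ∈ S, z = (h : ℤ) + c - 1 + t} ↔
      (∀ x : ℤ, (∃ n ∈ S, (n : ℤ) = x) ↔ ¬ ∃ n ∈ S, (n : ℤ) = (c : ℤ) - 1 - x)) :=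
  dedekind_ideal_subset_general S h0 hadd c hc h hh hh0
end

section
/- Let S = ⟨a, b⟩ be a numerical semigroup generated by two coprime integers a, b ≥ 2. Then the generating series of S satisfies (∑_{s∈S} t^s) = (1 - t^{ab}) / ((1 - t^a)(1 - t^b)) as formal power series over ℤ. -/
/-!
Write `S = {x a + y b}`. Multiplying `P_S` by `1 - t^a` removes `a + S` from `S`, and what is left is
`{y b : y < a}`: every element of `S` is either of this form or lies in `a + S`, and by coprimality
not both, since representations `x a + y b` with `y < a` are unique. Hence
`P_S (1 - t^a) = ∑_{y < a} t^{y b}`, a geometric sum in `t^b` whose product with `1 - t^b`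
is `1 - t^{ab}`.
-/

open PowerSeries Finset

theorem exists_mul_add_mul_eq_iff (a b n : ℕ) :
    (∃ x y : ℕ, n = x * a + y * b) ↔
      (∃ y < a, n = y * b) ∨ (a ≤ n ∧ ∃ x y : ℕ, n - a = x * a + y * b) := by
  rcases Nat.eq_zero_or_pos a with rfl | ha
  · simp
  constructor
  · rintro ⟨x, y, rfl⟩
    obtain ⟨m, hm⟩ : ∃ m, x * a + y * b = m * a + y % a * b :=
      ⟨x + y / a * b, by nth_rw 1 [← Nat.div_add_mod y a]; ring⟩
    rw [hm]
    rcases m with _ | k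
    · exact .inl ⟨y % a, Nat.mod_lt y ha, by simp⟩
    · rw [add_mul, one_mul]
      exact .inr ⟨by omega, k, y % a, by omega⟩
  · rintro (⟨y, -, rfl⟩ | ⟨han, x, y, h⟩)
    · exact ⟨0, y, by simp⟩
    · exact ⟨x + 1, y, by rw [add_mul, one_mul]; omega⟩

namespace Nat.Coprime

variable {a b : ℕ}

theorem eq_and_eq_of_mul_add_mul_eq (hab : a.Coprime b) {x₁ y₁ x₂ y₂ : ℕ} (hy₁ : y₁ < a)
    (hy₂ : y₂ < a) (h : x₁ * a + y₁ * b = x₂ * a + y₂ * b) : x₁ = x₂ ∧ y₁ = y₂ := by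
  have hmod : y₁ * b ≡ y₂ * b [MOD a] := by
    simpa [Nat.ModEq, Nat.add_mul_mod_self_right, add_comm] using congrArg (· % a) h
  obtain rfl : y₁ = y₂ := (hmod.cancel_right_of_coprime hab).eq_of_lt_of_lt hy₁ hy₂
  exact ⟨Nat.eq_of_mul_eq_mul_right (Nat.zero_lt_of_lt hy₁) (by omega), rfl⟩

theorem not_exists_sub_eq_mul_add_mul (hab : a.Coprime b) {n : ℕ} (hn : ∃ y < a, n = y * b) :
    ¬(a ≤ n ∧ ∃ x y : ℕ, n - a = x * a + y * b) := by
  obtain ⟨y, hy, rfl⟩ := hn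
  rintro ⟨han, x, y', h⟩
  have hrep : (x + 1) * a + y' * b = 0 * a + y * b := by rw [add_mul, one_mul]; omega
  have hy' : y' < y := Nat.lt_of_mul_lt_mul_right (a := b) (by rw [add_mul] at hrep; omega)
  exact absurd (hab.eq_and_eq_of_mul_add_mul_eq (hy'.trans hy) hy hrep).1 (Nat.succ_ne_zero x)

open Classical in
theorem coeff_sum_range_X_pow_mul {R : Type*} [Semiring R] (hab : a.Coprime b) (n : ℕ) :
    coeff n (∑ y ∈ range a, (X : R⟦X⟧) ^ (y * b)) = if ∃ y < a, n = y * b then 1 else 0 := by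
  have hinj : Set.InjOn (· * b) (range a) := fun y₁ hy₁ y₂ hy₂ h =>
    (hab.eq_and_eq_of_mul_add_mul_eq (x₁ := 0) (x₂ := 0) (mem_range.1 hy₁) (mem_range.1 hy₂)
      (by simpa using h)).2
  rw [← sum_image (g := (· * b)) (f := fun m => (X : R⟦X⟧) ^ m) hinj, map_sum]
  simp_rw [coeff_X_pow, sum_ite_eq, mem_image, mem_range, eq_comm (a := n)]

open Classical in
theorem mk_mul_one_sub_X_pow {R : Type*} [Ring R] (hab : a.Coprime b) :
    (mk fun n : ℕ => if ∃ x y : ℕ, n = x * a + y * b then (1 : R) else 0) * (1 - X ^ a) =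
      ∑ y ∈ range a, X ^ (y * b) := by
  ext n
  rw [hab.coeff_sum_range_X_pow_mul, mul_sub, mul_one, map_sub, coeff_mul_X_pow', coeff_mk,
    coeff_mk, exists_mul_add_mul_eq_iff a b n]
  have hdisjoint := hab.not_exists_sub_eq_mul_add_mul (n := n)
  split_ifs <;> simp_all

end Nat.Coprime

open Classical in
theorem generating_series_two_generators_general (a b : ℕ) (hab : Nat.Coprime a b) :
    (PowerSeries.mk fun n : ℕ => if ∃ x y : ℕ, n = x * a + y * b then (1 : ℤ) else 0) *
      ((1 - (PowerSeries.X : PowerSeries ℤ) ^ a) * (1 - (PowerSeries.X : PowerSeries ℤ) ^ b)) =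
      1 - (PowerSeries.X : PowerSeries ℤ) ^ (a * b) := by
  rw [← mul_assoc, hab.mk_mul_one_sub_X_pow]
  simp_rw [pow_mul']
  exact geom_sum_mul_neg _ _

open PowerSeries in
open Classical in
/-- For coprime `a, b ≥ 2` and `S = ⟨a, b⟩`, the generating series of `S`
satisfies `P_S(t) · (1 - t^a)(1 - t^b) = 1 - t^{ab}` in `ℤ⟦t⟧`, i.e.
`P_S(t) = (1 - t^{ab}) / ((1 - t^a)(1 - t^b))`. -/
theorem generating_series_two_generators (a b : ℕ) (ha : 2 ≤ a) (hb : 2 ≤ b)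
    (hab : Nat.Coprime a b) :
    (PowerSeries.mk fun n : ℕ => if ∃ x y : ℕ, n = x * a + y * b then (1 : ℤ) else 0) *
      ((1 - (PowerSeries.X : PowerSeries ℤ) ^ a) * (1 - (PowerSeries.X : PowerSeries ℤ) ^ b)) =
      1 - (PowerSeries.X : PowerSeries ℤ) ^ (a * b) :=
  generating_series_two_generators_general a b hab
end

section
/- Let S₁, S₂ be numerical semigroups, let d₁ ∈ S₂ and d₂ ∈ S₁ with gcd(d₁, d₂) = 1, and let S = d₁S₁ + d₂S₂ = {d₁x + d₂y : x ∈ S₁, y ∈ S₂} (the gluing of S₁ and S₂). Then the generating series satisfy P_S(t) = (1 - t^{d₁d₂}) · P_{S₁}(t^{d₁}) · P_{S₂}(t^{d₂}), where P_T(t) = ∑_{s∈T} t^s. -/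
/-!
Write `A = d₁S₁`, `B = d₂S₂` and `m = d₁d₂`. The coefficient of `tⁿ` in
`P_{S₁}(t^{d₁}) · P_{S₂}(t^{d₂})` counts the pairs `(a, b) ∈ A × B` with `a + b = n`. Since `A`
and `B` are closed under adding `m`, the pairs with `a ∈ A + m` correspond to the pairs summing to
`n - m`. Among the remaining pairs there is exactly one when `n ∈ S` and none otherwise: the pair
with least `a` is one of them, and if `a < a'` are first entries of two pairs then `a' - a` is a
positive multiple of both `d₁` and `d₂`, hence of `m`, so `a' ∈ A + m`. Thus the counts satisfy
`rₙ = rₙ₋ₘ + [n ∈ S]`, which is the claimed identity.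
-/

open Finset PowerSeries
open scoped Pointwise

namespace Gluing

open Classical

noncomputable def addReps (A B : Set ℕ) (n : ℕ) : Finset (ℕ × ℕ) :=
  (antidiagonal n).filter fun p => p.1 ∈ A ∧ p.2 ∈ B

variable {A B : Set ℕ} {n m : ℕ}

theorem mem_addReps {p : ℕ × ℕ} : p ∈ addReps A B n ↔ p.1 + p.2 = n ∧ p.1 ∈ A ∧ p.2 ∈ B := by
  simp [addReps]

theorem addReps_nonempty_iff : (addReps A B n).Nonempty ↔ n ∈ A + B := by
  simp only [Finset.Nonempty, mem_addReps, Set.mem_add, Prod.exists]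
  aesop

theorem coeff_mul_mk_indicator {R : Type*} [Semiring R] (A B : Set ℕ) (n : ℕ) :
    coeff n ((mk fun k => if k ∈ A then (1 : R) else 0) *
      mk fun k => if k ∈ B then (1 : R) else 0) =
      #(addReps A B n) := by
  rw [coeff_mul, addReps, ← sum_boole]
  simp only [coeff_mk, ite_zero_mul_ite_zero, mul_one]

theorem add_mul_mem_of_add_mem (hA : ∀ a ∈ A, a + m ∈ A) {a : ℕ} (ha : a ∈ A) (k : ℕ) :
    a + k * m ∈ A := by
  induction k with
  | zero => simpa using ha
  | succ k ih => simpa [add_mul, ← add_assoc] using hA _ ih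

theorem card_addReps_shifted (hA : ∀ a ∈ A, a + m ∈ A) :
    #((addReps A B n).filter fun p => ∃ a ∈ A, p.1 = a + m) =
      if m ≤ n then #(addReps A B (n - m)) else 0 := by
  split_ifs with hmn
  · symm
    apply card_nbij' (fun p => (p.1 + m, p.2)) (fun p => (p.1 - m, p.2))
    · intro p hp
      obtain ⟨hsum, ha, hb⟩ := mem_addReps.mp hp
      exact mem_filter.mpr ⟨mem_addReps.mpr ⟨by simp only; omega, hA _ ha, hb⟩, p.1, ha, rfl⟩
    · intro p hp
      obtain ⟨hp, a, ha, hpa⟩ := mem_filter.mp hp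
      obtain ⟨hsum, -, hb⟩ := mem_addReps.mp hp
      exact mem_addReps.mpr ⟨by simp only; omega, by simpa [hpa] using ha, hb⟩
    · intro p _
      simp
    · intro p hp
      obtain ⟨-, a, -, hpa⟩ := mem_filter.mp hp
      ext <;> simp only; omega
  · refine card_eq_zero.mpr (filter_eq_empty_iff.mpr fun p hp ⟨a, _, hpa⟩ => ?_)
    have := (mem_addReps.mp hp).1
    omega

theorem exists_mem_addReps_not_shifted (hB : ∀ b ∈ B, b + m ∈ B) (hm : 0 < m)
    (h : (addReps A B n).Nonempty) : ∃ p ∈ addReps A B n, ¬∃ a ∈ A, p.1 = a + m := by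
  obtain ⟨p, hp, hmin⟩ := exists_min_image (addReps A B n) Prod.fst h
  refine ⟨p, hp, fun ⟨a, ha, hpa⟩ => ?_⟩
  obtain ⟨hsum, -, hb⟩ := mem_addReps.mp hp
  have : p.1 ≤ a := hmin (a, p.2 + m) (mem_addReps.mpr ⟨by simp only; omega, ha, hB _ hb⟩)
  omega

section Coprime

variable {d₁ d₂ : ℕ}

theorem shifted_of_fst_lt (hA : ∀ a ∈ A, a + d₁ * d₂ ∈ A) (hdvdA : ∀ a ∈ A, d₁ ∣ a)
    (hdvdB : ∀ b ∈ B, d₂ ∣ b) (hcop : d₁.Coprime d₂) {p q : ℕ × ℕ} (hp : p ∈ addReps A B n)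
    (hq : q ∈ addReps A B n) (hlt : p.1 < q.1) : ∃ a ∈ A, q.1 = a + d₁ * d₂ := by
  obtain ⟨hpsum, hpa, hpb⟩ := mem_addReps.mp hp
  obtain ⟨hqsum, hqa, hqb⟩ := mem_addReps.mp hq
  have hdvd₁ : d₁ ∣ q.1 - p.1 := Nat.dvd_sub (hdvdA _ hqa) (hdvdA _ hpa)
  have hdvd₂ : d₂ ∣ q.1 - p.1 := by
    rw [show q.1 - p.1 = p.2 - q.2 by omega]
    exact Nat.dvd_sub (hdvdB _ hpb) (hdvdB _ hqb)
  obtain ⟨k, hk⟩ := hcop.mul_dvd_of_dvd_of_dvd hdvd₁ hdvd₂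
  obtain ⟨k, rfl⟩ := Nat.exists_eq_add_one_of_ne_zero (by rintro rfl; omega : k ≠ 0)
  have : d₁ * d₂ * (k + 1) = k * (d₁ * d₂) + d₁ * d₂ := by ring
  exact ⟨p.1 + k * (d₁ * d₂), add_mul_mem_of_add_mem hA hpa k, by omega⟩

theorem eq_of_not_shifted (hA : ∀ a ∈ A, a + d₁ * d₂ ∈ A) (hdvdA : ∀ a ∈ A, d₁ ∣ a)
    (hdvdB : ∀ b ∈ B, d₂ ∣ b) (hcop : d₁.Coprime d₂) {p q : ℕ × ℕ} (hp : p ∈ addReps A B n)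
    (hq : q ∈ addReps A B n) (hp' : ¬∃ a ∈ A, p.1 = a + d₁ * d₂)
    (hq' : ¬∃ a ∈ A, q.1 = a + d₁ * d₂) : p = q := by
  rcases lt_trichotomy p.1 q.1 with hlt | heq | hgt
  · exact absurd (shifted_of_fst_lt hA hdvdA hdvdB hcop hp hq hlt) hq'
  · have := (mem_addReps.mp hp).1
    have := (mem_addReps.mp hq).1
    ext <;> omega
  · exact absurd (shifted_of_fst_lt hA hdvdA hdvdB hcop hq hp hgt) hp'

theorem card_addReps_not_shifted (hA : ∀ a ∈ A, a + d₁ * d₂ ∈ A) (hB : ∀ b ∈ B, b + d₁ * d₂ ∈ B)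
    (hdvdA : ∀ a ∈ A, d₁ ∣ a) (hdvdB : ∀ b ∈ B, d₂ ∣ b) (hcop : d₁.Coprime d₂)
    (hm : 0 < d₁ * d₂) :
    #((addReps A B n).filter fun p => ¬∃ a ∈ A, p.1 = a + d₁ * d₂) =
      if (addReps A B n).Nonempty then 1 else 0 := by
  split_ifs with h
  · obtain ⟨p, hp, hp'⟩ := exists_mem_addReps_not_shifted hB hm h
    refine card_eq_one.mpr ⟨p, eq_singleton_iff_unique_mem.mpr ⟨mem_filter.mpr ⟨hp, hp'⟩, ?_⟩⟩
    intro q hq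
    obtain ⟨hq, hq'⟩ := mem_filter.mp hq
    exact eq_of_not_shifted hA hdvdA hdvdB hcop hq hp hq' hp'
  · rw [not_nonempty_iff_eq_empty.mp h, filter_empty, card_empty]

theorem card_addReps_eq (hA : ∀ a ∈ A, a + d₁ * d₂ ∈ A) (hB : ∀ b ∈ B, b + d₁ * d₂ ∈ B)
    (hdvdA : ∀ a ∈ A, d₁ ∣ a) (hdvdB : ∀ b ∈ B, d₂ ∣ b) (hcop : d₁.Coprime d₂)
    (hm : 0 < d₁ * d₂) :
    #(addReps A B n) = (if d₁ * d₂ ≤ n then #(addReps A B (n - d₁ * d₂)) else 0) +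
      if (addReps A B n).Nonempty then 1 else 0 := by
  rw [← card_addReps_shifted hA, ← card_addReps_not_shifted hA hB hdvdA hdvdB hcop hm,
    card_filter_add_card_filter_not]

theorem mk_indicator_add_eq_one_sub_X_pow_mul {R : Type*} [Ring R]
    (hA : ∀ a ∈ A, a + d₁ * d₂ ∈ A) (hB : ∀ b ∈ B, b + d₁ * d₂ ∈ B) (hdvdA : ∀ a ∈ A, d₁ ∣ a)
    (hdvdB : ∀ b ∈ B, d₂ ∣ b) (hcop : d₁.Coprime d₂) (hm : 0 < d₁ * d₂) :
    (mk fun n => if n ∈ A + B then (1 : R) else 0) =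
      (1 - X ^ (d₁ * d₂) : R⟦X⟧) *
        ((mk fun n => if n ∈ A then (1 : R) else 0) *
          mk fun n => if n ∈ B then (1 : R) else 0) := by
  ext n
  rw [sub_mul, one_mul, map_sub, coeff_X_pow_mul', coeff_mul_mk_indicator, coeff_mul_mk_indicator,
    coeff_mk, card_addReps_eq hA hB hdvdA hdvdB hcop hm, ← addReps_nonempty_iff]
  split_ifs <;> push_cast <;> abel

end Coprime

end Gluing

open Classical in
theorem generating_series_gluing_general (S₁ S₂ : Set ℕ)
    (hadd1 : ∀ a ∈ S₁, ∀ b ∈ S₁, a + b ∈ S₁)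
    (hadd2 : ∀ a ∈ S₂, ∀ b ∈ S₂, a + b ∈ S₂)
    (d₁ d₂ : ℕ) (hd₁ : d₁ ∈ S₂) (hd₂ : d₂ ∈ S₁)
    (h2a : 2 ≤ d₁) (h2b : 2 ≤ d₂) (hcop : Nat.Coprime d₁ d₂) :
    (PowerSeries.mk fun n : ℕ =>
        if ∃ x ∈ S₁, ∃ y ∈ S₂, n = d₁ * x + d₂ * y then (1 : ℤ) else 0) =
      (1 - (PowerSeries.X : PowerSeries ℤ) ^ (d₁ * d₂)) *
        (PowerSeries.mk fun n : ℕ => if ∃ x ∈ S₁, n = d₁ * x then (1 : ℤ) else 0) *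
        (PowerSeries.mk fun n : ℕ => if ∃ y ∈ S₂, n = d₂ * y then (1 : ℤ) else 0) := by
  set A : Set ℕ := {a | ∃ x ∈ S₁, a = d₁ * x}
  set B : Set ℕ := {b | ∃ y ∈ S₂, b = d₂ * y}
  have hA : ∀ a ∈ A, a + d₁ * d₂ ∈ A := by
    rintro _ ⟨x, hx, rfl⟩
    exact ⟨x + d₂, hadd1 _ hx _ hd₂, by ring⟩
  have hB : ∀ b ∈ B, b + d₁ * d₂ ∈ B := by
    rintro _ ⟨y, hy, rfl⟩
    exact ⟨y + d₁, hadd2 _ hy _ hd₁, by ring⟩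
  have hdvdA : ∀ a ∈ A, d₁ ∣ a := fun _ ⟨x, _, hx⟩ => Dvd.intro x hx.symm
  have hdvdB : ∀ b ∈ B, d₂ ∣ b := fun _ ⟨y, _, hy⟩ => Dvd.intro y hy.symm
  have hS : ∀ n, n ∈ A + B ↔ ∃ x ∈ S₁, ∃ y ∈ S₂, n = d₁ * x + d₂ * y := by
    intro n
    constructor
    · rintro ⟨_, ⟨x, hx, rfl⟩, _, ⟨y, hy, rfl⟩, rfl⟩
      exact ⟨x, hx, y, hy, rfl⟩
    · rintro ⟨x, hx, y, hy, rfl⟩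
      exact ⟨_, ⟨x, hx, rfl⟩, _, ⟨y, hy, rfl⟩, rfl⟩
  have key :=
    Gluing.mk_indicator_add_eq_one_sub_X_pow_mul (R := ℤ) hA hB hdvdA hdvdB hcop (by positivity)
  simp only [hS] at key
  rw [mul_assoc]
  exact key

open Classical in
/-- The generating series of the gluing `S = d₁S₁ + d₂S₂` of two numerical
semigroups satisfies `P_S(t) = (1 - t^{d₁d₂}) · P_{S₁}(t^{d₁}) · P_{S₂}(t^{d₂})`. -/
theorem generating_series_gluing (S₁ S₂ : Set ℕ)
    (h01 : 0 ∈ S₁) (hadd1 : ∀ a ∈ S₁, ∀ b ∈ S₁, a + b ∈ S₁)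
    (hfin1 : {n : ℕ | n ∉ S₁}.Finite)
    (h02 : 0 ∈ S₂) (hadd2 : ∀ a ∈ S₂, ∀ b ∈ S₂, a + b ∈ S₂)
    (hfin2 : {n : ℕ | n ∉ S₂}.Finite)
    (d₁ d₂ : ℕ) (hd₁ : d₁ ∈ S₂) (hd₂ : d₂ ∈ S₁)
    (h2a : 2 ≤ d₁) (h2b : 2 ≤ d₂) (hcop : Nat.Coprime d₁ d₂) :
    (PowerSeries.mk fun n : ℕ =>
        if ∃ x ∈ S₁, ∃ y ∈ S₂, n = d₁ * x + d₂ * y then (1 : ℤ) else 0) =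
      (1 - (PowerSeries.X : PowerSeries ℤ) ^ (d₁ * d₂)) *
        (PowerSeries.mk fun n : ℕ => if ∃ x ∈ S₁, n = d₁ * x then (1 : ℤ) else 0) *
        (PowerSeries.mk fun n : ℕ => if ∃ y ∈ S₂, n = d₂ * y then (1 : ℤ) else 0) :=
  generating_series_gluing_general S₁ S₂ hadd1 hadd2 d₁ d₂ hd₁ hd₂ h2a h2b hcop
end

section
/- Let S be a free numerical semigroup with generators a₁,…,a_g and n_i = gcd(a₁,…,a_{i-1})/gcd(a₁,…,a_i) for i ≥ 2, so that n_i·a_i ∈ ⟨a₁,…,a_{i-1}⟩ for all i. Then every element s ∈ S has a unique representation s = λ₁a₁ + ∑_{i=2}^g λ_i a_i with 0 ≤ λ_i < n_i for i ≥ 2 and λ₁ ∈ ℕ. -/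
/-!
Existence: working down from the last generator, write the coefficient of `aᵢ` as `q nᵢ + r`
with `r < nᵢ` and trade `q nᵢ aᵢ` for a combination of earlier generators; this leaves all
later coefficients untouched. Uniqueness: at the largest index `i` where two representations
differ, every earlier term is divisible by `d = gcd(a_j : j < i)`, so `λᵢ aᵢ ≡ μᵢ aᵢ [MOD d]`.
Cancelling `aᵢ` gives `λᵢ ≡ μᵢ` modulo `d / gcd(d, aᵢ) = nᵢ`, hence `λᵢ = μᵢ`.
-/

theorem exists_sum_eq_of_mem_closure_image {ι : Type*} [Fintype ι] (a : ι → ℕ) {t : Set ι}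
    {x : ℕ} (hx : x ∈ AddSubmonoid.closure (a '' t)) :
    ∃ e : ι → ℕ, (∀ j ∉ t, e j = 0) ∧ x = ∑ j, e j * a j := by
  classical
  induction hx using AddSubmonoid.closure_induction with
  | mem x hx =>
    obtain ⟨j, hj, rfl⟩ := hx
    refine ⟨Pi.single j 1, fun k hk => Pi.single_eq_of_ne (ne_of_mem_of_not_mem hj hk).symm _, ?_⟩
    simp [Pi.single_apply]
  | zero => exact ⟨0, fun _ _ => rfl, by simp⟩
  | add x y _ _ hx hy =>
    obtain ⟨e, he, rfl⟩ := hx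
    obtain ⟨e', he', rfl⟩ := hy
    exact ⟨e + e', fun j hj => by simp [he j hj, he' j hj], by
      simp [add_mul, Finset.sum_add_distrib]⟩

theorem eq_of_mul_modEq_of_lt {d m b x y : ℕ} (hd : d ≠ 0) (hdm : d = m * Nat.gcd b d)
    (hx : x < m) (hy : y < m) (h : x * b ≡ y * b [MOD d]) : x = y := by
  have hd0 : 0 < d := Nat.pos_of_ne_zero hd
  have hm : d / Nat.gcd d b = m := by
    rw [Nat.gcd_comm, Nat.div_eq_iff_eq_mul_left (Nat.gcd_pos_of_pos_right _ hd0)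
      (Nat.gcd_dvd_right _ _)]
    exact hdm
  exact (hm ▸ h.cancel_right_div_gcd hd0).eq_of_lt_of_lt hx hy

theorem gcd_Iio_ne_zero {ι : Type*} [LinearOrder ι] [LocallyFiniteOrderBot ι] {a : ι → ℕ}
    (ha : ∀ i, a i ≠ 0) {i : ι} (hi : ¬IsMin i) : (Finset.Iio i).gcd a ≠ 0 := by
  obtain ⟨j, hj⟩ := not_isMin_iff.1 hi
  exact fun h => ha j (Finset.gcd_eq_zero_iff.1 h j (Finset.mem_Iio.2 hj))

section Representation

variable {ι : Type*} [Fintype ι] [LinearOrder ι] {a : ι → ℕ}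

theorem exists_sum_eq_reduce_mod {i : ι} {m : ℕ}
    (hfree : m * a i ∈ AddSubmonoid.closure (a '' Set.Iio i)) (c : ι → ℕ) :
    ∃ c' : ι → ℕ, c' i = c i % m ∧ (∀ j, i < j → c' j = c j) ∧
      ∑ j, c' j * a j = ∑ j, c j * a j := by
  classical
  obtain ⟨e, he, hsum⟩ := exists_sum_eq_of_mem_closure_image a hfree
  have he_ge : ∀ j, i ≤ j → e j = 0 := fun j hj => he j (not_lt.2 hj)
  set q := c i / m
  refine ⟨fun j => if j = i then c i % m else c j + q * e j, by simp, fun j hj => ?_, ?_⟩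
  · simp [hj.ne', he_ge j hj.le]
  · have hterm : ∀ j, (if j = i then c i % m else c j + q * e j) * a j +
        (if j = i then q * (m * a i) else 0) = c j * a j + q * (e j * a j) := by
      intro j
      split_ifs with h
      · subst h
        rw [he_ge j le_rfl, zero_mul, mul_zero, add_zero]
        calc c j % m * a j + q * (m * a j) = (c j % m + m * q) * a j := by ring
          _ = c j * a j := by rw [Nat.mod_add_div]
      · ring
    have := Finset.sum_congr rfl (fun j (_ : j ∈ Finset.univ) => hterm j)
    rw [Finset.sum_add_distrib, Finset.sum_add_distrib, Finset.sum_ite_eq', ← Finset.mul_sum,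
      ← hsum] at this
    simpa using this

theorem exists_lt_and_sum_eq {n : ι → ℕ}
    (hfree : ∀ i, ¬IsMin i → n i * a i ∈ AddSubmonoid.closure (a '' Set.Iio i))
    (hn : ∀ i, ¬IsMin i → n i ≠ 0) (c : ι → ℕ) :
    ∃ lam : ι → ℕ, (∀ i, ¬IsMin i → lam i < n i) ∧ ∑ i, lam i * a i = ∑ i, c i * a i := by
  classical
  suffices ∀ s : Finset ι, ∃ lam : ι → ℕ, (∀ i ∈ s, ¬IsMin i → lam i < n i) ∧
      ∑ i, lam i * a i = ∑ i, c i * a i by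
    simpa using this Finset.univ
  intro s
  induction s using Finset.induction_on_min with
  | empty => exact ⟨c, by simp, rfl⟩
  | insert i s hlt ih =>
    obtain ⟨lam, hlam, hsum⟩ := ih
    by_cases hi : IsMin i
    · refine ⟨lam, fun j hj hj' => ?_, hsum⟩
      rcases Finset.mem_insert.1 hj with rfl | hj
      · exact absurd hi hj'
      · exact hlam j hj hj'
    · obtain ⟨lam', hi', habove, hsum'⟩ := exists_sum_eq_reduce_mod (hfree i hi) lam
      refine ⟨lam', fun j hj hj' => ?_, hsum'.trans hsum⟩
      rcases Finset.mem_insert.1 hj with rfl | hj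
      · exact hi' ▸ Nat.mod_lt _ (Nat.pos_of_ne_zero (hn j hj'))
      · exact habove j (hlt j hj) ▸ hlam j hj hj'

variable [LocallyFiniteOrderBot ι]

theorem mul_modEq_gcd_Iio_of_sum_eq {lam mu : ι → ℕ} {i : ι}
    (hsum : ∑ j, lam j * a j = ∑ j, mu j * a j) (habove : ∀ j, i < j → lam j = mu j) :
    lam i * a i ≡ mu i * a i [MOD (Finset.Iio i).gcd a] := by
  classical
  have hrest : ∑ j ∈ Finset.univ.erase i, lam j * a j ≡
      ∑ j ∈ Finset.univ.erase i, mu j * a j [MOD (Finset.Iio i).gcd a] := by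
    refine Nat.ModEq.sum fun j hj => ?_
    rcases lt_or_gt_of_ne (Finset.ne_of_mem_erase hj) with hji | hij
    · have hd : (Finset.Iio i).gcd a ∣ a j := Finset.gcd_dvd (Finset.mem_Iio.2 hji)
      exact (Nat.modEq_zero_iff_dvd.2 (hd.mul_left _)).trans
        (Nat.modEq_zero_iff_dvd.2 (hd.mul_left _)).symm
    · rw [habove j hij]
  rw [← Finset.add_sum_erase _ _ (Finset.mem_univ i),
    ← Finset.add_sum_erase _ _ (Finset.mem_univ i)] at hsum
  exact hrest.add_right_cancel (hsum ▸ Nat.ModEq.refl _)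

theorem eq_of_sum_eq_of_lt {n : ι → ℕ} (ha : ∀ i, a i ≠ 0)
    (hn : ∀ i, ¬IsMin i → (Finset.Iio i).gcd a = n i * (Finset.Iic i).gcd a)
    {lam mu : ι → ℕ} (hlam : ∀ i, ¬IsMin i → lam i < n i) (hmu : ∀ i, ¬IsMin i → mu i < n i)
    (hsum : ∑ i, lam i * a i = ∑ i, mu i * a i) : lam = mu := by
  classical
  funext i
  induction i using WellFoundedGT.induction with
  | _ i ih =>
  have hmod := mul_modEq_gcd_Iio_of_sum_eq hsum ih
  by_cases hi : IsMin i
  · rw [Finset.Iio_eq_empty.2 hi, Finset.gcd_empty, Nat.modEq_zero_iff] at hmod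
    exact Nat.eq_of_mul_eq_mul_right (Nat.pos_of_ne_zero (ha i)) hmod
  · refine eq_of_mul_modEq_of_lt (gcd_Iio_ne_zero ha hi) ?_ (hlam i hi) (hmu i hi) hmod
    have hgcd := hn i hi
    rwa [← Finset.Iio_insert, Finset.gcd_insert] at hgcd

end Representation

theorem Fin.not_isMin_iff_pos {g : ℕ} (i : Fin g) : ¬IsMin i ↔ 0 < (i : ℕ) := by
  rw [not_isMin_iff]
  exact ⟨fun ⟨j, hj⟩ => (Nat.zero_le j).trans_lt hj, fun hi => ⟨⟨0, hi.trans i.isLt⟩, hi⟩⟩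

theorem free_semigroup_unique_representation_general (g : ℕ)
    (a : Fin g → ℕ) (hpos : ∀ i, 0 < a i)
    (n : Fin g → ℕ)
    (hn : ∀ i : Fin g, 0 < (i : ℕ) →
      (Finset.Iio i).gcd a = n i * (Finset.Iic i).gcd a)
    (hfree : ∀ i : Fin g, 0 < (i : ℕ) →
      n i * a i ∈ AddSubmonoid.closure (a '' {j : Fin g | j < i})) :
    ∀ s ∈ AddSubmonoid.closure (Set.range a),
      ∃! lam : Fin g → ℕ,
        (∀ i : Fin g, 0 < (i : ℕ) → lam i < n i) ∧
        s = ∑ i, lam i * a i := by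
  simp only [← Fin.not_isMin_iff_pos] at hn hfree ⊢
  have ha : ∀ i, a i ≠ 0 := fun i => (hpos i).ne'
  have hn0 : ∀ i, ¬IsMin i → n i ≠ 0 := fun i hi h0 =>
    gcd_Iio_ne_zero ha hi (by rw [hn i hi, h0, zero_mul])
  intro s hs
  obtain ⟨c, rfl⟩ := AddSubmonoid.mem_closure_range_iff_of_fintype.1 hs
  simp only [smul_eq_mul]
  obtain ⟨lam, hlam, hsum⟩ := exists_lt_and_sum_eq hfree hn0 c
  exact ⟨lam, ⟨hlam, hsum.symm⟩, fun mu ⟨hmu, hmusum⟩ =>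
    eq_of_sum_eq_of_lt ha hn hmu hlam (hmusum.symm.trans hsum.symm)⟩

/-- Every element of a free numerical semigroup `S = ⟨a₁,…,a_g⟩` (with
`nᵢ = gcd(a₁,…,a_{i-1})/gcd(a₁,…,aᵢ)` and `nᵢ·aᵢ ∈ ⟨a₁,…,a_{i-1}⟩`) has a
unique representation `s = λ₁a₁ + ∑_{i≥2} λᵢaᵢ` with `0 ≤ λᵢ < nᵢ` for
`i ≥ 2`. -/
theorem free_semigroup_unique_representation (g : ℕ) (hg : 0 < g)
    (a : Fin g → ℕ) (hpos : ∀ i, 0 < a i)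
    (hgcd : Finset.univ.gcd a = 1)
    (n : Fin g → ℕ)
    (hn : ∀ i : Fin g, 0 < (i : ℕ) →
      (Finset.Iio i).gcd a = n i * (Finset.Iic i).gcd a)
    (hfree : ∀ i : Fin g, 0 < (i : ℕ) →
      n i * a i ∈ AddSubmonoid.closure (a '' {j : Fin g | j < i})) :
    ∀ s ∈ AddSubmonoid.closure (Set.range a),
      ∃! lam : Fin g → ℕ,
        (∀ i : Fin g, 0 < (i : ℕ) → lam i < n i) ∧
        s = ∑ i, lam i * a i :=
  free_semigroup_unique_representation_general g a hpos n hn hfree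
end

section
/- Let S be a free numerical semigroup with generators a₁,…,a_g and n_i = gcd(a₁,…,a_{i-1})/gcd(a₁,…,a_i). Then the conductor of S is c(S) = ∑_{i=2}^g (n_i - 1)·a_i - a₁ + 1. -/
/-!
Write `Sₖ = ⟨a₁,…,aₖ⟩`, `dₖ = gcd(a₁,…,aₖ)` and `Fₖ = ∑_{2 ≤ i ≤ k} (nᵢ - 1)·aᵢ - a₁`. By induction
on `k`, `Fₖ` is the largest multiple of `dₖ` outside `Sₖ ⊆ dₖℤ`. For the step put `e = dₖ₊₁`, so
`dₖ = n·e` and `aₖ₊₁ = e·b` with `gcd(n, b) = 1`. A multiple of `e` is `λ·aₖ₊₁` plus a multiple of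
`dₖ` for a unique residue `0 ≤ λ < n`, so every multiple of `e` above `Fₖ + (n - 1)·aₖ₊₁` lies in
`Sₖ₊₁`. Conversely, in a representation `s + μ·aₖ₊₁` of that number reducing modulo `n·e` forces
`μ ≡ n - 1 (mod n)`, and since `n·aₖ₊₁ ∈ Sₖ` it would give a representation of `Fₖ`. For `k = g`
we have `d_g = 1`, and the conductor is `F_g + 1`.
-/

open Finset

theorem Nat.Coprime.exists_lt_dvd_sub_mul {n b : ℕ} (hn : 0 < n) (h : n.Coprime b) (m : ℤ) :
    ∃ l < n, (n : ℤ) ∣ m - l * b := by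
  obtain ⟨u, v, huv⟩ := h.isCoprime
  have hl : 0 ≤ m * v % n := Int.emod_nonneg _ (by omega)
  have hln : m * v % n < n := Int.emod_lt_of_pos _ (by omega)
  refine ⟨(m * v % n).toNat, by omega, m * u + m * v / n * b, ?_⟩
  rw [Int.toNat_of_nonneg hl, Int.emod_def]
  linear_combination -m * huv

/-- `F` is the Frobenius number of `S` inside the lattice `dℤ`. -/
structure IsFrobeniusNumber (S : AddSubmonoid ℤ) (d F : ℤ) : Prop where
  dvd_of_mem : ∀ s ∈ S, d ∣ s
  dvd : d ∣ F
  notMem : F ∉ S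
  mem_of_dvd : ∀ m, d ∣ m → F < m → m ∈ S

theorem isFrobeniusNumber_closure_singleton {a : ℕ} (ha : 0 < a) :
    IsFrobeniusNumber (AddSubmonoid.closure {(a : ℤ)}) a (-a) where
  dvd_of_mem s hs := by
    obtain ⟨k, rfl⟩ := AddSubmonoid.mem_closure_singleton.mp hs
    exact ⟨k, by simp [mul_comm]⟩
  dvd := (dvd_neg).mpr (dvd_refl _)
  notMem h := by
    obtain ⟨k, hk⟩ := AddSubmonoid.mem_closure_singleton.mp h
    have : (0 : ℤ) ≤ k • (a : ℤ) := by positivity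
    omega
  mem_of_dvd m := by
    rintro ⟨t, rfl⟩ hlt
    have ht : 0 ≤ t := by nlinarith
    exact AddSubmonoid.mem_closure_singleton.mpr ⟨t.toNat, by simp [ht, mul_comm]⟩

theorem AddSubmonoid.mem_sup_closure_singleton {M : Type*} [AddCommMonoid M]
    {S : AddSubmonoid M} {a x : M} :
    x ∈ S ⊔ AddSubmonoid.closure {a} ↔ ∃ s ∈ S, ∃ k : ℕ, s + k • a = x := by
  simp [AddSubmonoid.mem_sup, AddSubmonoid.mem_closure_singleton]

theorem IsFrobeniusNumber.sup_closure_singleton {S : AddSubmonoid ℤ} {F : ℤ} {n e b : ℕ}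
    (hS : IsFrobeniusNumber S (n * e : ℕ) F) (hn : 0 < n) (he : 0 < e) (hnb : n.Coprime b)
    (hmem : ((n * (e * b) : ℕ) : ℤ) ∈ S) :
    IsFrobeniusNumber (S ⊔ AddSubmonoid.closure {((e * b : ℕ) : ℤ)}) e
      (F + (n - 1) * (e * b : ℕ)) where
  dvd_of_mem x hx := by
    obtain ⟨s, hs, k, rfl⟩ := AddSubmonoid.mem_sup_closure_singleton.mp hx
    have := hS.dvd_of_mem s hs
    rw [nsmul_eq_mul]
    push_cast at this ⊢
    exact dvd_add (dvd_of_mul_left_dvd this) ⟨k * b, by ring⟩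
  dvd := by
    have := hS.dvd
    push_cast at this ⊢
    exact dvd_add (dvd_of_mul_left_dvd this) ⟨(n - 1) * b, by ring⟩
  notMem h := by
    obtain ⟨s, hs, μ, hsμ⟩ := AddSubmonoid.mem_sup_closure_singleton.mp h
    rw [nsmul_eq_mul] at hsμ
    have hdvd : ((n * e : ℕ) : ℤ) ∣ ((μ : ℤ) - (n - 1)) * b * e := by
      have : ((μ : ℤ) - (n - 1)) * b * e = F - s := by push_cast at hsμ; linear_combination hsμ
      rw [this]
      exact dvd_sub hS.dvd (hS.dvd_of_mem s hs)
    obtain ⟨k, hk⟩ : (n : ℤ) ∣ (μ : ℤ) - (n - 1) := by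
      push_cast at hdvd
      have := (mul_dvd_mul_iff_right (by positivity : (e : ℤ) ≠ 0)).mp hdvd
      exact hnb.isCoprime.dvd_of_dvd_mul_right this
    have hk0 : 0 ≤ k := by nlinarith
    refine hS.notMem ?_
    have hF : F = s + k.toNat • ((n * (e * b) : ℕ) : ℤ) := by
      push_cast at hsμ
      rw [nsmul_eq_mul, Int.toNat_of_nonneg hk0]
      push_cast
      linear_combination -hsμ + (e * b : ℤ) * hk
    rw [hF]
    exact add_mem hs (nsmul_mem hmem _)
  mem_of_dvd m := by
    rintro ⟨m', rfl⟩ hlt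
    obtain ⟨l, hl, t, ht⟩ := hnb.exists_lt_dvd_sub_mul hn m'
    have hrest : (e : ℤ) * m' - l * (e * b : ℕ) ∈ S := by
      refine hS.mem_of_dvd _ ⟨t, ?_⟩ ?_
      · push_cast; linear_combination (e : ℤ) * ht
      · have : (l : ℤ) ≤ n - 1 := by omega
        have : (0 : ℤ) ≤ (e * b : ℕ) := by positivity
        nlinarith
    exact AddSubmonoid.mem_sup_closure_singleton.mpr ⟨_, hrest, l, by rw [nsmul_eq_mul]; ring⟩

theorem IsFrobeniusNumber.conductor_eq {T : AddSubmonoid ℕ} {F : ℤ}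
    (h : IsFrobeniusNumber (T.map (Nat.castAddMonoidHom ℤ)) 1 F) :
    ((sInf {c : ℕ | ∀ m ≥ c, m ∈ T} : ℕ) : ℤ) = F + 1 := by
  have hmem (m : ℕ) : (m : ℤ) ∈ T.map (Nat.castAddMonoidHom ℤ) ↔ m ∈ T :=
    AddSubmonoid.mem_map_iff_mem (f := Nat.castAddMonoidHom ℤ) Nat.cast_injective
  obtain ⟨C, -, hC⟩ := AddSubmonoid.mem_map.mp (h.mem_of_dvd (F + 1) (one_dvd _) (lt_add_one F))
  simp only [Nat.coe_castAddMonoidHom] at hC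
  suffices IsLeast {c : ℕ | ∀ m ≥ c, m ∈ T} C by rw [this.csInf_eq, hC]
  refine ⟨fun m hm => (hmem m).mp (h.mem_of_dvd _ (one_dvd _) (by omega)), fun c hc => ?_⟩
  by_contra! hlt
  apply h.notMem
  rw [show F = ((C - 1 : ℕ) : ℤ) by omega, hmem]
  exact hc _ (by omega)

def initSeg (g k : ℕ) : Finset (Fin g) := univ.filter fun j => (j : ℕ) < k

section initSeg

variable {g k : ℕ}

theorem initSeg_self : initSeg g g = univ := filter_true_of_mem fun j _ => j.isLt

theorem initSeg_one (hg : 0 < g) : initSeg g 1 = {⟨0, hg⟩} := by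
  ext j; simp [initSeg, Fin.ext_iff]

theorem initSeg_succ (hk : k < g) : initSeg g (k + 1) = insert ⟨k, hk⟩ (initSeg g k) := by
  ext j; simp [initSeg, Fin.ext_iff]; omega

theorem Fin.Iio_eq_initSeg (hk : k < g) : Iio (⟨k, hk⟩ : Fin g) = initSeg g k := by
  ext j; simp [initSeg, Fin.lt_def]

theorem Fin.Iic_eq_initSeg (hk : k < g) : Iic (⟨k, hk⟩ : Fin g) = initSeg g (k + 1) := by
  ext j; simp [initSeg, Fin.le_def]

theorem gcd_initSeg_pos {a : Fin g → ℕ} (hg : 0 < g) (ha₀ : 0 < a ⟨0, hg⟩) (hk : 0 < k) :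
    0 < (initSeg g k).gcd a :=
  Nat.pos_of_ne_zero fun h => ha₀.ne' (gcd_eq_zero_iff.mp h _ (by simp [initSeg, hk]))

end initSeg

section FreeSemigroup

variable {g : ℕ} (a n : Fin g → ℕ) (hg : 0 < g)

/-- `⟨a₁,…,aₖ⟩` inside `ℤ`; `Fin g` counts from `0`, so `aⱼ₊₁` is `a j`. -/
def prefixSemigroup (k : ℕ) : AddSubmonoid ℤ :=
  (AddSubmonoid.closure (a '' initSeg g k)).map (Nat.castAddMonoidHom ℤ)

def prefixFrobenius (k : ℕ) : ℤ :=
  ∑ j ∈ (initSeg g k).filter (fun j : Fin g => 0 < (j : ℕ)), ((n j : ℤ) - 1) * a j - a ⟨0, hg⟩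

theorem isFrobeniusNumber_prefix_one (ha₀ : 0 < a ⟨0, hg⟩) :
    IsFrobeniusNumber (prefixSemigroup a 1) ((initSeg g 1).gcd a : ℕ)
      (prefixFrobenius a n hg 1) := by
  rw [prefixSemigroup, prefixFrobenius, initSeg_one hg, filter_singleton, if_neg (lt_irrefl 0),
    coe_singleton, Set.image_singleton, AddMonoidHom.map_mclosure, Set.image_singleton,
    gcd_singleton, normalize_eq, sum_empty, zero_sub, Nat.coe_castAddMonoidHom]
  exact isFrobeniusNumber_closure_singleton ha₀

theorem isFrobeniusNumber_prefix_succ {k : ℕ} (hk : 0 < k) (hkg : k < g)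
    (ha₀ : 0 < a ⟨0, hg⟩)
    (hn : (Iio ⟨k, hkg⟩).gcd a = n ⟨k, hkg⟩ * (Iic ⟨k, hkg⟩).gcd a)
    (hfree : n ⟨k, hkg⟩ * a ⟨k, hkg⟩ ∈ AddSubmonoid.closure (a '' {j | j < ⟨k, hkg⟩}))
    (h : IsFrobeniusNumber (prefixSemigroup a k) ((initSeg g k).gcd a : ℕ)
      (prefixFrobenius a n hg k)) :
    IsFrobeniusNumber (prefixSemigroup a (k + 1)) ((initSeg g (k + 1)).gcd a : ℕ)
      (prefixFrobenius a n hg (k + 1)) := by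
  set i : Fin g := ⟨k, hkg⟩
  set e := (initSeg g (k + 1)).gcd a with he_def
  rw [Fin.Iio_eq_initSeg, Fin.Iic_eq_initSeg] at hn
  rw [hn] at h
  have he : 0 < e := gcd_initSeg_pos hg ha₀ k.succ_pos
  have hni : 0 < n i := Nat.pos_of_mul_pos_right (hn ▸ gcd_initSeg_pos hg ha₀ hk)
  obtain ⟨b, hb⟩ : e ∣ a i := gcd_dvd (by simp [initSeg, i])
  have hcop : (n i).Coprime b := by
    have : e * Nat.gcd b (n i) = e * 1 := by
      rw [← Nat.gcd_mul_left, ← hb, mul_one, mul_comm e, ← hn, he_def, initSeg_succ hkg,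
        gcd_insert]
      rfl
    exact Nat.Coprime.symm (Nat.eq_of_mul_eq_mul_left he this)
  have hmem : ((n i * (e * b) : ℕ) : ℤ) ∈ prefixSemigroup a k := by
    rw [prefixSemigroup, ← hb, ← Fin.Iio_eq_initSeg hkg, coe_Iio]
    exact AddSubmonoid.mem_map_of_mem _ hfree
  have hS : prefixSemigroup a (k + 1) =
      prefixSemigroup a k ⊔ AddSubmonoid.closure {((e * b : ℕ) : ℤ)} := by
    rw [prefixSemigroup, prefixSemigroup, initSeg_succ hkg, coe_insert, Set.image_insert_eq,
      Set.insert_eq, AddSubmonoid.closure_union, AddSubmonoid.map_sup, sup_comm,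
      AddMonoidHom.map_mclosure (s := {_}), Set.image_singleton, hb, Nat.coe_castAddMonoidHom]
  have hF : prefixFrobenius a n hg (k + 1) =
      prefixFrobenius a n hg k + (n i - 1) * ((e * b : ℕ) : ℤ) := by
    rw [prefixFrobenius, prefixFrobenius, initSeg_succ hkg, filter_insert, if_pos hk,
      sum_insert (by simp [initSeg]), hb]
    ring
  rw [hS, hF]
  exact h.sup_closure_singleton hni he hcop hmem

theorem isFrobeniusNumber_prefix (ha₀ : 0 < a ⟨0, hg⟩)
    (hn : ∀ i : Fin g, 0 < (i : ℕ) → (Iio i).gcd a = n i * (Iic i).gcd a)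
    (hfree : ∀ i : Fin g, 0 < (i : ℕ) →
      n i * a i ∈ AddSubmonoid.closure (a '' {j : Fin g | j < i}))
    {k : ℕ} (hk : 1 ≤ k) (hkg : k ≤ g) :
    IsFrobeniusNumber (prefixSemigroup a k) ((initSeg g k).gcd a : ℕ)
      (prefixFrobenius a n hg k) := by
  induction k, hk using Nat.le_induction with
  | base => exact isFrobeniusNumber_prefix_one a n hg ha₀
  | succ k hk ih =>
    exact isFrobeniusNumber_prefix_succ a n hg hk hkg ha₀ (hn _ hk) (hfree _ hk) (ih (by omega))

end FreeSemigroup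

/-- The conductor of a free numerical semigroup `S = ⟨a₁,…,a_g⟩` is
`c(S) = ∑_{i=2}^g (nᵢ - 1)·aᵢ - a₁ + 1`. -/
theorem free_semigroup_conductor (g : ℕ) (hg : 0 < g)
    (a : Fin g → ℕ) (hpos : ∀ i, 0 < a i)
    (hgcd : Finset.univ.gcd a = 1)
    (n : Fin g → ℕ)
    (hn : ∀ i : Fin g, 0 < (i : ℕ) →
      (Finset.Iio i).gcd a = n i * (Finset.Iic i).gcd a)
    (hfree : ∀ i : Fin g, 0 < (i : ℕ) →
      n i * a i ∈ AddSubmonoid.closure (a '' {j : Fin g | j < i})) :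
    (((sInf {c : ℕ | ∀ m ≥ c, m ∈ AddSubmonoid.closure (Set.range a)} : ℕ) : ℤ) =
      (∑ i ∈ Finset.univ.filter (fun i : Fin g => 0 < (i : ℕ)),
        ((n i : ℤ) - 1) * (a i : ℤ)) - (a ⟨0, hg⟩ : ℤ) + 1) := by
  have h := isFrobeniusNumber_prefix a n hg (hpos _) hn hfree hg le_rfl
  rw [prefixSemigroup, prefixFrobenius, initSeg_self, coe_univ, Set.image_univ, hgcd,
    Nat.cast_one] at h
  exact h.conductor_eq
end

section
/- Every free numerical semigroup is symmetric. -/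
/-!
If `S ⊆ ℕ` is symmetric with Frobenius number `F`, `0 < d`, `gcd(d, b) = 1` and `b ∈ S`, then the
gluing `d • S + ℕ b` is symmetric with Frobenius number `d F + (d - 1) b`. Indeed every integer is
uniquely `d y + j b` with `0 ≤ j < d`, and it lies in `d • S + ℕ b` iff `y ∈ S`: a representation
`d s + t b` has `t ≡ j [MOD d]`, and the surplus multiple of `d b` is absorbed by `s` because
`b ∈ S`. Applying this to `d y + j b` and to `(d F + (d - 1) b) - (d y + j b) = d (F - y) + (d - 1 - j) b`
transports symmetry. A free semigroup `⟨a₁, …, a_g⟩` is the gluing of `⟨a₁/d, …, a_{g-1}/d⟩`,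
`d = n_g`, with `b = a_g`, which is free again, so induction on `g` starting from `ℕ` concludes.
-/

lemma exists_eq_mul_add_mul_of_isCoprime {d b : ℤ} (hd : 0 < d) (hcop : IsCoprime d b) (x : ℤ) :
    ∃ y j : ℤ, 0 ≤ j ∧ j < d ∧ x = d * y + j * b := by
  obtain ⟨u, v, huv⟩ := hcop
  refine ⟨x * u + x * v / d * b, x * v % d, Int.emod_nonneg _ hd.ne', Int.emod_lt_of_pos _ hd, ?_⟩
  linear_combination (-x) * huv - b * Int.mul_ediv_add_emod (x * v) d

namespace NumericalSemigroup

def IsSymmetricWithFrobenius (S : AddSubmonoid ℕ) (F : ℤ) : Prop :=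
  ∀ x : ℤ, x ∈ ((↑) : ℕ → ℤ) '' S ↔ F - x ∉ ((↑) : ℕ → ℤ) '' S

def glue (S : AddSubmonoid ℕ) (d b : ℕ) : AddSubmonoid ℕ :=
  S.map (AddMonoidHom.mulLeft d) ⊔ AddSubmonoid.closure {b}

section Gluing

variable {S : AddSubmonoid ℕ} {d b : ℕ} {F : ℤ}

lemma mem_glue_iff {m : ℕ} : m ∈ glue S d b ↔ ∃ s ∈ S, ∃ t : ℕ, d * s + t * b = m := by
  simp only [glue, AddSubmonoid.mem_sup, AddSubmonoid.mem_map, AddSubmonoid.mem_closure_singleton,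
    AddMonoidHom.coe_mulLeft, smul_eq_mul]
  constructor
  · rintro ⟨_, ⟨s, hs, rfl⟩, _, ⟨t, rfl⟩, rfl⟩
    exact ⟨s, hs, t, rfl⟩
  · rintro ⟨s, hs, t, rfl⟩
    exact ⟨_, ⟨s, hs, rfl⟩, _, ⟨t, rfl⟩, rfl⟩

lemma intCast_mem_glue_iff (hd : 0 < d) (hcop : d.Coprime b) (hb : b ∈ S) {y j : ℤ}
    (hj₀ : 0 ≤ j) (hjd : j < d) :
    d * y + j * b ∈ ((↑) : ℕ → ℤ) '' glue S d b ↔ y ∈ ((↑) : ℕ → ℤ) '' S := by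
  constructor
  · rintro ⟨_, hm, hmy⟩
    obtain ⟨s, hs, t, rfl⟩ := mem_glue_iff.1 hm
    push_cast at hmy
    have hdvd : (d : ℤ) ∣ t - j :=
      (Nat.isCoprime_iff_coprime.2 hcop).dvd_of_dvd_mul_right ⟨y - s, by linear_combination hmy⟩
    obtain ⟨q, hq⟩ := hdvd
    have hq₀ : 0 ≤ q := by nlinarith
    refine ⟨s + q.toNat * b, add_mem hs (nsmul_mem hb _), ?_⟩
    have : (d : ℤ) * y = d * (s + q * b) := by linear_combination -hmy + b * hq
    push_cast [Int.toNat_of_nonneg hq₀]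
    exact (mul_left_cancel₀ (by positivity) this).symm
  · rintro ⟨s, hs, rfl⟩
    refine ⟨d * s + j.toNat * b, mem_glue_iff.2 ⟨s, hs, _, rfl⟩, ?_⟩
    push_cast [Int.toNat_of_nonneg hj₀]
    ring

theorem IsSymmetricWithFrobenius.glue (hS : IsSymmetricWithFrobenius S F) (hd : 0 < d)
    (hcop : d.Coprime b) (hb : b ∈ S) :
    IsSymmetricWithFrobenius (glue S d b) (d * F + (d - 1) * b) := by
  intro x
  obtain ⟨y, j, hj₀, hjd, rfl⟩ :=
    exists_eq_mul_add_mul_of_isCoprime (by positivity) (Nat.isCoprime_iff_coprime.2 hcop) x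
  have hFx : d * F + (d - 1) * b - (d * y + j * b) = d * (F - y) + (d - 1 - j) * (b : ℤ) := by
    ring
  rw [hFx, intCast_mem_glue_iff hd hcop hb hj₀ hjd,
    intCast_mem_glue_iff hd hcop hb (by omega) (by omega)]
  exact hS y

theorem isSymmetricWithFrobenius_top : IsSymmetricWithFrobenius ⊤ (-1) := by
  intro x
  simp only [AddSubmonoid.coe_top, Set.image_univ, Set.mem_range, not_exists]
  constructor
  · rintro ⟨m, rfl⟩ m' h
    omega
  · intro h
    exact ⟨x.toNat, Int.toNat_of_nonneg (by_contra fun hx => h (-1 - x).toNat (by omega))⟩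

theorem IsSymmetricWithFrobenius.conductor_eq (hS : IsSymmetricWithFrobenius S F) :
    ((sInf {c : ℕ | ∀ m ≥ c, m ∈ S} : ℕ) : ℤ) = F + 1 := by
  have hF : F ∉ ((↑) : ℕ → ℤ) '' S := by simpa using (hS 0).1 ⟨0, S.zero_mem, rfl⟩
  have hF₁ : -1 ≤ F := by
    by_contra! h
    obtain ⟨m, _, hm⟩ := (hS (-1)).2 fun ⟨m, _, hm⟩ => by omega
    omega
  have hmem : ∀ m : ℕ, F < m → m ∈ S := by
    intro m hm
    obtain ⟨m', hm', h⟩ := (hS m).2 fun ⟨m'', _, h⟩ => by omega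
    rwa [← Nat.cast_injective h]
  have hc : (F + 1).toNat ∈ {c : ℕ | ∀ m ≥ c, m ∈ S} := fun m hm => hmem m (by omega)
  suffices sInf {c : ℕ | ∀ m ≥ c, m ∈ S} = (F + 1).toNat by omega
  refine le_antisymm (Nat.sInf_le hc) (le_csInf ⟨_, hc⟩ fun c hc' => ?_)
  by_contra! h
  exact hF ⟨F.toNat, hc' _ (by omega), by omega⟩

end Gluing

structure IsFree {g : ℕ} (a n : Fin g → ℕ) : Prop where
  gcd_Iio : ∀ i : Fin g, 0 < (i : ℕ) → (Finset.Iio i).gcd a = n i * (Finset.Iic i).gcd a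
  mul_mem : ∀ i : Fin g, 0 < (i : ℕ) → n i * a i ∈ AddSubmonoid.closure (a '' {j | j < i})

section Restriction

variable {k d : ℕ} {a : Fin (k + 1) → ℕ} {a' : Fin k → ℕ}

lemma gcd_map_castSuccEmb (ha : ∀ i, a i.castSucc = d * a' i) (s : Finset (Fin k)) :
    (s.map Fin.castSuccEmb).gcd a = d * s.gcd a' := by
  rw [Finset.map_eq_image, Finset.gcd_image]
  simp only [Function.comp_def, Fin.coe_castSuccEmb, ha]
  rw [Finset.gcd_mul_left, normalize_eq]

lemma closure_image_castSucc (ha : ∀ i, a i.castSucc = d * a' i) (s : Set (Fin k)) :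
    AddSubmonoid.closure (a '' (Fin.castSucc '' s)) =
      (AddSubmonoid.closure (a' '' s)).map (AddMonoidHom.mulLeft d) := by
  rw [AddMonoidHom.map_mclosure, Set.image_image, Set.image_image]
  simp [ha]

lemma closure_range_eq_glue (ha : ∀ i, a i.castSucc = d * a' i) :
    AddSubmonoid.closure (Set.range a) =
      glue (AddSubmonoid.closure (Set.range a')) d (a (Fin.last k)) := by
  have : Set.range a = a '' (Fin.castSucc '' Set.univ) ∪ {a (Fin.last k)} := by
    ext m; simp [Fin.exists_fin_succ', or_comm, eq_comm]
  rw [this, AddSubmonoid.closure_union, closure_image_castSucc ha, Set.image_univ, glue]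

theorem IsFree.init {n : Fin (k + 1) → ℕ} (h : IsFree a n) (ha : ∀ i, a i.castSucc = d * a' i)
    (hd : 0 < d) : IsFree a' (fun i => n i.castSucc) where
  gcd_Iio i hi := by
    have := h.gcd_Iio i.castSucc hi
    rw [← Fin.map_castSuccEmb_Iio, ← Fin.map_castSuccEmb_Iic, gcd_map_castSuccEmb ha,
      gcd_map_castSuccEmb ha, mul_left_comm] at this
    exact Nat.eq_of_mul_eq_mul_left hd this
  mul_mem i hi := by
    have := h.mul_mem i.castSucc hi
    change _ ∈ AddSubmonoid.closure (a '' Set.Iio i.castSucc) at this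
    rw [← Fin.image_castSucc_Iio, closure_image_castSucc ha, ha, mul_left_comm] at this
    exact (AddSubmonoid.mem_map_iff_mem (mul_right_injective₀ hd.ne')).1 this

end Restriction

theorem exists_isSymmetricWithFrobenius_of_isFree {g : ℕ} {a n : Fin g → ℕ}
    (hpos : ∀ i, 0 < a i) (hgcd : Finset.univ.gcd a = 1) (hfree : IsFree a n) :
    ∃ F, IsSymmetricWithFrobenius (AddSubmonoid.closure (Set.range a)) F := by
  induction g with
  | zero => simp at hgcd
  | succ k ih =>
    rcases k.eq_zero_or_pos with rfl | hk
    · have h1 : a 0 = 1 := by simpa using hgcd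
      refine ⟨-1, ?_⟩
      have hrange : Set.range a = {1} := by ext; simp [Fin.exists_fin_one, h1, eq_comm]
      rw [hrange, Nat.addSubmonoidClosure_one]
      exact isSymmetricWithFrobenius_top
    set d := (Finset.Iio (Fin.last k)).gcd a
    set a' : Fin k → ℕ := fun i => a i.castSucc / d
    have ha : ∀ i, a i.castSucc = d * a' i := fun i =>
      (Nat.mul_div_cancel' (Finset.gcd_dvd (Finset.mem_Iio.2 (Fin.castSucc_lt_last i)))).symm
    have hd : 0 < d := Nat.pos_of_mul_pos_right (ha ⟨0, hk⟩ ▸ hpos _)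
    have hgcd' : Finset.univ.gcd a' = 1 := by
      have : d * Finset.univ.gcd a' = d * 1 := by
        rw [← gcd_map_castSuccEmb ha, ← Fin.Iio_last_eq_map, mul_one]
      exact Nat.eq_of_mul_eq_mul_left hd this
    have hIic : Finset.Iic (Fin.last k) = Finset.univ := by ext; simp [Fin.le_last]
    have hnd : n (Fin.last k) = d := by
      have := hfree.gcd_Iio (Fin.last k) hk
      rwa [hIic, hgcd, mul_one, eq_comm] at this
    have hcop : d.Coprime (a (Fin.last k)) := by
      rw [Nat.coprime_comm, Nat.Coprime, ← hgcd, ← hIic, ← Finset.Iio_insert, Finset.gcd_insert]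
      rfl
    have hb : a (Fin.last k) ∈ AddSubmonoid.closure (Set.range a') := by
      have := hfree.mul_mem (Fin.last k) hk
      have hIio : {j | j < Fin.last k} = Fin.castSucc '' Set.univ := by
        ext j; simp [Fin.lt_def]
      rw [hnd, hIio, closure_image_castSucc ha, Set.image_univ] at this
      exact (AddSubmonoid.mem_map_iff_mem (mul_right_injective₀ hd.ne')).1 this
    obtain ⟨F, hF⟩ := ih (fun i => Nat.pos_of_mul_pos_left (ha i ▸ hpos i.castSucc)) hgcd'
      (hfree.init ha hd)
    exact ⟨_, closure_range_eq_glue ha ▸ hF.glue hd hcop hb⟩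

end NumericalSemigroup

theorem free_semigroup_symmetric_general (g : ℕ)
    (a : Fin g → ℕ) (hpos : ∀ i, 0 < a i)
    (hgcd : Finset.univ.gcd a = 1)
    (n : Fin g → ℕ)
    (hn : ∀ i : Fin g, 0 < (i : ℕ) →
      (Finset.Iio i).gcd a = n i * (Finset.Iic i).gcd a)
    (hfree : ∀ i : Fin g, 0 < (i : ℕ) →
      n i * a i ∈ AddSubmonoid.closure (a '' {j : Fin g | j < i})) :
    ∀ x : ℤ,
      (∃ m ∈ AddSubmonoid.closure (Set.range a), (m : ℤ) = x) ↔
      ¬ ∃ m ∈ AddSubmonoid.closure (Set.range a),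
        (m : ℤ) = ((sInf {c : ℕ | ∀ m' ≥ c,
          m' ∈ AddSubmonoid.closure (Set.range a)} : ℕ) : ℤ) - 1 - x := by
  obtain ⟨F, hF⟩ :=
    NumericalSemigroup.exists_isSymmetricWithFrobenius_of_isFree hpos hgcd ⟨hn, hfree⟩
  rw [hF.conductor_eq, add_sub_cancel_right]
  exact hF

/-- Every free numerical semigroup is symmetric. -/
theorem free_semigroup_symmetric (g : ℕ) (hg : 0 < g)
    (a : Fin g → ℕ) (hpos : ∀ i, 0 < a i)
    (hgcd : Finset.univ.gcd a = 1)
    (n : Fin g → ℕ)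
    (hn : ∀ i : Fin g, 0 < (i : ℕ) →
      (Finset.Iio i).gcd a = n i * (Finset.Iic i).gcd a)
    (hfree : ∀ i : Fin g, 0 < (i : ℕ) →
      n i * a i ∈ AddSubmonoid.closure (a '' {j : Fin g | j < i})) :
    ∀ x : ℤ,
      (∃ m ∈ AddSubmonoid.closure (Set.range a), (m : ℤ) = x) ↔
      ¬ ∃ m ∈ AddSubmonoid.closure (Set.range a),
        (m : ℤ) = ((sInf {c : ℕ | ∀ m' ≥ c,
          m' ∈ AddSubmonoid.closure (Set.range a)} : ℕ) : ℤ) - 1 - x :=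
  free_semigroup_symmetric_general g a hpos hgcd n hn hfree
end

section
/- For every n ≥ 1, the numerical semigroup S_n = ⟨6, 6n+4, 6n+8, 12n+11, 12n+15⟩ is not a complete intersection: the pairwise sums fail Delorme's condition because the quantities m_L = min(⟨L⟩ ∩ ⟨G\L⟩) for the five singleton subsets L of the generating set, namely 12n+12, 12n+8, 12n+16, 24n+22, 24n+30, are pairwise distinct. -/
/-! For a generator `g ≠ 6`, `g` is not in the submonoid generated by the other four while `2g`
is, so `m_{g} = 2g`; for `g = 6` the first common element is `(6n+4) + (6n+8)`. Non-membership
is linear arithmetic once an element of `⟨a, b, c, d⟩` is split as `y₁ + y₂ + y₃ + y₄` with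
`yᵢ ∈ ⟨gᵢ⟩`: each `yᵢ` is `0`, `gᵢ` or at least `2gᵢ`, and the summands coming from `6` and from
the even generators `6n+4`, `6n+8` are divisible by `6` and by `2`. -/

namespace AddSubmonoid

variable {M : Type*} [AddCommMonoid M]

theorem mem_closure_insert {a x : M} {s : Set M} :
    x ∈ closure (insert a s) ↔ ∃ y ∈ closure {a}, ∃ z ∈ closure s, y + z = x := by
  rw [← Set.singleton_union, closure_union, mem_sup]

theorem exists_add_of_mem_closure_four {a b c d x : M} (hx : x ∈ closure {a, b, c, d}) :
    ∃ y₁ ∈ closure {a}, ∃ y₂ ∈ closure {b}, ∃ y₃ ∈ closure {c}, ∃ y₄ ∈ closure {d},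
      y₁ + y₂ + y₃ + y₄ = x := by
  simp only [mem_closure_insert] at hx
  obtain ⟨y₁, h₁, _, ⟨y₂, h₂, _, ⟨y₃, h₃, y₄, h₄, rfl⟩, rfl⟩, rfl⟩ := hx
  exact ⟨y₁, h₁, y₂, h₂, y₃, h₃, y₄, h₄, by simp only [add_assoc]⟩

end AddSubmonoid

namespace Nat

theorem mul_add_mem_closure (p a b : ℕ) {x : ℕ} {s : Set ℕ} (ha : a ∈ s) (hb : b ∈ s)
    (hx : p * a + b = x) : x ∈ AddSubmonoid.closure s :=
  hx ▸ add_mem (nsmul_mem (AddSubmonoid.subset_closure ha) p) (AddSubmonoid.subset_closure hb)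

theorem dvd_of_mem_closure_singleton {a y : ℕ} (hy : y ∈ AddSubmonoid.closure {a}) : a ∣ y := by
  obtain ⟨k, rfl⟩ := AddSubmonoid.mem_closure_singleton.1 hy
  exact Dvd.intro_left k rfl

theorem eq_zero_or_eq_or_two_mul_le_of_mem_closure_singleton {a y : ℕ}
    (hy : y ∈ AddSubmonoid.closure {a}) : y = 0 ∨ y = a ∨ 2 * a ≤ y := by
  obtain ⟨k, rfl⟩ := AddSubmonoid.mem_closure_singleton.1 hy
  rcases k with _ | _ | k
  · simp
  · simp
  · exact .inr <| .inr <| Nat.mul_le_mul_right a (by omega)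

theorem isLeast_of_notMem_of_two_mul_mem {a c : ℕ} {s : Set ℕ} (ha : a ∉ AddSubmonoid.closure s)
    (hc : c ∈ AddSubmonoid.closure s) (hca : c = 2 * a) :
    IsLeast {m | m ≠ 0 ∧ m ∈ AddSubmonoid.closure {a} ∧ m ∈ AddSubmonoid.closure s} c := by
  have ha0 : a ≠ 0 := by rintro rfl; exact ha (zero_mem _)
  refine ⟨⟨by omega, hca ▸ mul_add_mem_closure 1 a a rfl rfl (by ring), hc⟩, ?_⟩
  rintro m ⟨hm0, hma, hms⟩
  rcases eq_zero_or_eq_or_two_mul_le_of_mem_closure_singleton hma with rfl | rfl | h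
  · exact absurd rfl hm0
  · exact absurd hms ha
  · omega

end Nat

namespace Teragaito

open Nat (dvd_of_mem_closure_singleton eq_zero_or_eq_or_two_mul_le_of_mem_closure_singleton)

theorem le_of_six_dvd_of_mem_closure (n : ℕ) {m : ℕ} (hm0 : m ≠ 0) (hm6 : 6 ∣ m)
    (hm : m ∈ AddSubmonoid.closure {6*n+4, 6*n+8, 12*n+11, 12*n+15}) : 12*n+12 ≤ m := by
  obtain ⟨y₁, h₁, y₂, h₂, y₃, h₃, y₄, h₄, rfl⟩ := AddSubmonoid.exists_add_of_mem_closure_four hm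
  have := eq_zero_or_eq_or_two_mul_le_of_mem_closure_singleton h₁
  have := eq_zero_or_eq_or_two_mul_le_of_mem_closure_singleton h₂
  have := eq_zero_or_eq_or_two_mul_le_of_mem_closure_singleton h₃
  have := eq_zero_or_eq_or_two_mul_le_of_mem_closure_singleton h₄
  omega

theorem six_mul_add_four_notMem_closure (n : ℕ) :
    6*n+4 ∉ AddSubmonoid.closure {6, 6*n+8, 12*n+11, 12*n+15} := by
  intro h
  obtain ⟨y₁, h₁, y₂, h₂, y₃, h₃, y₄, h₄, h⟩ := AddSubmonoid.exists_add_of_mem_closure_four h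
  have := dvd_of_mem_closure_singleton h₁
  have := eq_zero_or_eq_or_two_mul_le_of_mem_closure_singleton h₂
  have := eq_zero_or_eq_or_two_mul_le_of_mem_closure_singleton h₃
  have := eq_zero_or_eq_or_two_mul_le_of_mem_closure_singleton h₄
  omega

theorem six_mul_add_eight_notMem_closure {n : ℕ} (hn : 1 ≤ n) :
    6*n+8 ∉ AddSubmonoid.closure {6, 6*n+4, 12*n+11, 12*n+15} := by
  intro h
  obtain ⟨y₁, h₁, y₂, h₂, y₃, h₃, y₄, h₄, h⟩ := AddSubmonoid.exists_add_of_mem_closure_four h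
  have := dvd_of_mem_closure_singleton h₁
  have := eq_zero_or_eq_or_two_mul_le_of_mem_closure_singleton h₂
  have := eq_zero_or_eq_or_two_mul_le_of_mem_closure_singleton h₃
  have := eq_zero_or_eq_or_two_mul_le_of_mem_closure_singleton h₄
  omega

theorem twelve_mul_add_eleven_notMem_closure (n : ℕ) :
    12*n+11 ∉ AddSubmonoid.closure {6, 6*n+4, 6*n+8, 12*n+15} := by
  intro h
  obtain ⟨y₁, h₁, y₂, h₂, y₃, h₃, y₄, h₄, h⟩ := AddSubmonoid.exists_add_of_mem_closure_four h
  have := dvd_of_mem_closure_singleton h₁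
  have : 2 ∣ y₂ := .trans ⟨3*n+2, by ring⟩ (dvd_of_mem_closure_singleton h₂)
  have : 2 ∣ y₃ := .trans ⟨3*n+4, by ring⟩ (dvd_of_mem_closure_singleton h₃)
  have := eq_zero_or_eq_or_two_mul_le_of_mem_closure_singleton h₄
  omega

theorem twelve_mul_add_fifteen_notMem_closure {n : ℕ} (hn : 1 ≤ n) :
    12*n+15 ∉ AddSubmonoid.closure {6, 6*n+4, 6*n+8, 12*n+11} := by
  intro h
  obtain ⟨y₁, h₁, y₂, h₂, y₃, h₃, y₄, h₄, h⟩ := AddSubmonoid.exists_add_of_mem_closure_four h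
  have := dvd_of_mem_closure_singleton h₁
  have : 2 ∣ y₂ := .trans ⟨3*n+2, by ring⟩ (dvd_of_mem_closure_singleton h₂)
  have : 2 ∣ y₃ := .trans ⟨3*n+4, by ring⟩ (dvd_of_mem_closure_singleton h₃)
  have := eq_zero_or_eq_or_two_mul_le_of_mem_closure_singleton h₂
  have := eq_zero_or_eq_or_two_mul_le_of_mem_closure_singleton h₃
  have := eq_zero_or_eq_or_two_mul_le_of_mem_closure_singleton h₄
  omega

end Teragaito

open Teragaito Nat

/-- (Teragaito's examples.) For `n ≥ 1` and the generating set
`G = {6, 6n+4, 6n+8, 12n+11, 12n+15}`, the quantities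
`m_L = min((⟨L⟩ ∩ ⟨G∖L⟩) ∖ {0})` for the five singleton subsets `L` are
`12n+12, 12n+8, 12n+16, 24n+22, 24n+30`, and they are pairwise distinct; hence
by Delorme's algorithm `S_n = ⟨6, 6n+4, 6n+8, 12n+11, 12n+15⟩` is not a
complete intersection. -/
theorem teragaito_not_CI (n : ℕ) (hn : 1 ≤ n) :
    IsLeast {m : ℕ | m ≠ 0 ∧ m ∈ AddSubmonoid.closure ({6} : Set ℕ) ∧
        m ∈ AddSubmonoid.closure ({6*n+4, 6*n+8, 12*n+11, 12*n+15} : Set ℕ)}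
      (12*n+12) ∧
    IsLeast {m : ℕ | m ≠ 0 ∧ m ∈ AddSubmonoid.closure ({6*n+4} : Set ℕ) ∧
        m ∈ AddSubmonoid.closure ({6, 6*n+8, 12*n+11, 12*n+15} : Set ℕ)}
      (12*n+8) ∧
    IsLeast {m : ℕ | m ≠ 0 ∧ m ∈ AddSubmonoid.closure ({6*n+8} : Set ℕ) ∧
        m ∈ AddSubmonoid.closure ({6, 6*n+4, 12*n+11, 12*n+15} : Set ℕ)}
      (12*n+16) ∧
    IsLeast {m : ℕ | m ≠ 0 ∧ m ∈ AddSubmonoid.closure ({12*n+11} : Set ℕ) ∧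
        m ∈ AddSubmonoid.closure ({6, 6*n+4, 6*n+8, 12*n+15} : Set ℕ)}
      (24*n+22) ∧
    IsLeast {m : ℕ | m ≠ 0 ∧ m ∈ AddSubmonoid.closure ({12*n+15} : Set ℕ) ∧
        m ∈ AddSubmonoid.closure ({6, 6*n+4, 6*n+8, 12*n+11} : Set ℕ)}
      (24*n+30) ∧
    ([12*n+12, 12*n+8, 12*n+16, 24*n+22, 24*n+30] : List ℕ).Pairwise (· ≠ ·) := by
  refine ⟨⟨⟨by omega, ?_, ?_⟩, ?_⟩, ?_, ?_, ?_, ?_, by simp; omega⟩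
  · exact mul_add_mem_closure (2*n+1) 6 6 rfl rfl (by ring)
  · exact mul_add_mem_closure 1 (6*n+4) (6*n+8) (by simp) (by simp) (by ring)
  · rintro m ⟨hm0, hm6, hm⟩
    exact le_of_six_dvd_of_mem_closure n hm0 (dvd_of_mem_closure_singleton hm6) hm
  · exact isLeast_of_notMem_of_two_mul_mem (six_mul_add_four_notMem_closure n)
      (mul_add_mem_closure n 6 (6*n+8) (by simp) (by simp) (by ring)) (by ring)
  · exact isLeast_of_notMem_of_two_mul_mem (six_mul_add_eight_notMem_closure hn)
      (mul_add_mem_closure (n+2) 6 (6*n+4) (by simp) (by simp) (by ring)) (by ring)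
  · exact isLeast_of_notMem_of_two_mul_mem (twelve_mul_add_eleven_notMem_closure n)
      (mul_add_mem_closure (3*n+3) 6 (6*n+4) (by simp) (by simp) (by ring)) (by ring)
  · exact isLeast_of_notMem_of_two_mul_mem (twelve_mul_add_fifteen_notMem_closure hn)
      (mul_add_mem_closure (4*n+4) 6 6 (by simp) (by simp) (by ring)) (by ring)
end
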